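/- arXiv:1602.06940 — 4 statements merged into one kernel-verified Lean document; each statement's English description precedes it below -/
import Mathlib

section
/- In the two-agent manipulation setting, suppose ≻₁' is a report under which agent 1's allocation is exactly S (so |S| equals the number of occurrences of agent 1 in π). Then for every report ≻₁'' that orders the items of S in the same relative order as ≻₁' and ranks every item of O∖S below every item of S, running sequential allocation on (≻₁'', ≻₂) still gives agent 1 the allocation S and agent 2 the allocation O∖S. -/
/-! As long as every pick of agent 1 under `p1'` lies in `S`, that pick is also the first
remaining item of `S` in `p1''`, which lists `S` first and in the same order; so agent 1 picks
the same item under both reports and the two runs coincide turn by turn. With two agents and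
as many turns as items, agent 2 then receives exactly the items agent 1 does not. -/

/-- Sequential allocation: process the picking sequence in order; at each step the
agent whose turn it is receives his most-preferred (earliest in his ranking list)
item among those not yet allocated. Returns each agent's allocation. -/
def seqAlloc {A I : Type*} [DecidableEq A] [DecidableEq I]
    (prefs : A → List I) : List A → Finset I → A → Finset I
  | [], _ => fun _ => ∅
  | a :: rest, rem =>
    match (prefs a).find? (fun o => decide (o ∈ rem)) with
    | none => seqAlloc prefs rest rem
    | some o => fun j =>
        if j = a then insert o (seqAlloc prefs rest (rem.erase o) j)
        else seqAlloc prefs rest (rem.erase o) j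

/-- A report (strict linear order) over the item set `O`, given as a ranking list:
most preferred item first. -/
def IsReport {I : Type*} [DecidableEq I] (O : Finset I) (p : List I) : Prop :=
  p.Nodup ∧ ∀ o, o ∈ p ↔ o ∈ O

/-- Two-agent sequential allocation: agent `0` ("agent 1") reports `p1`,
agent `1` ("agent 2") reports `p2`. -/
def alloc2 {I : Type*} [DecidableEq I] (p1 p2 : List I)
    (π : List (Fin 2)) (O : Finset I) : Fin 2 → Finset I :=
  seqAlloc (fun a => if a = 0 then p1 else p2) π O

/-- `S` is achievable by agent 1: some report gives agent 1 an allocation including `S`. -/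
def Achievable {I : Type*} [DecidableEq I] (p2 : List I) (π : List (Fin 2))
    (O : Finset I) (S : Finset I) : Prop :=
  ∃ p1, IsReport O p1 ∧ S ⊆ alloc2 p1 p2 π O 0

/-- `o` is strictly preferred to `o'` in the ranking list `p`. -/
def Prefers {I : Type*} [DecidableEq I] (p : List I) (o o' : I) : Prop :=
  p.idxOf o < p.idxOf o'

instance {I : Type*} [DecidableEq I] (p : List I) (o o' : I) : Decidable (Prefers p o o') :=
  inferInstanceAs (Decidable (_ < _))

/-- `u` is an additive utility consistent with the ranking `p` on item set `O`. -/
def Consistent {I : Type*} [DecidableEq I] (O : Finset I) (p : List I) (u : I → ℝ) : Prop :=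
  (∀ o ∈ O, 0 < u o) ∧ ∀ o ∈ O, ∀ o' ∈ O, u o' < u o ↔ Prefers p o o'

theorem List.find?_filter_eq_some {α : Type*} {l : List α} {p q : α → Bool} {o : α}
    (h : l.find? q = some o) (hp : p o) : (l.filter p).find? q = some o := by
  obtain ⟨hqo, as, bs, rfl, has⟩ := List.find?_eq_some_iff_append.1 h
  rw [List.find?_filter, List.find?_eq_some_iff_append]
  refine ⟨by simp [hp, hqo], as, bs, rfl, fun a ha => ?_⟩
  simp [show q a = false by simpa using has a ha]

theorem find?_eq_of_filter_eq {I : Type*} [DecidableEq I] {S : Finset I} {p q : List I}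
    (horder : q.filter (· ∈ S) = p.filter (· ∈ S))
    (hbelow : q = q.filter (· ∈ S) ++ q.filter (· ∉ S))
    {rem : Finset I} {o : I} (h : p.find? (· ∈ rem) = some o) (ho : o ∈ S) :
    q.find? (· ∈ rem) = some o := by
  rw [hbelow, List.find?_append, horder, List.find?_filter_eq_some h (by simpa using ho)]
  rfl

section SeqAlloc

variable {A I : Type*} [DecidableEq A] [DecidableEq I]

theorem seqAlloc_cons_of_find?_eq_none {prefs : A → List I} {a : A} {π : List A}
    {rem : Finset I} (h : (prefs a).find? (· ∈ rem) = none) :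
    seqAlloc prefs (a :: π) rem = seqAlloc prefs π rem := by
  simp only [seqAlloc, h]

theorem seqAlloc_cons_of_find?_eq_some {prefs : A → List I} {a : A} {π : List A}
    {rem : Finset I} {o : I} (h : (prefs a).find? (· ∈ rem) = some o) (j : A) :
    seqAlloc prefs (a :: π) rem j =
      if j = a then insert o (seqAlloc prefs π (rem.erase o) j)
      else seqAlloc prefs π (rem.erase o) j := by
  simp only [seqAlloc, h]

theorem seqAlloc_subset (prefs : A → List I) (π : List A) (rem : Finset I) (j : A) :
    seqAlloc prefs π rem j ⊆ rem := by
  induction π generalizing rem with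
  | nil => simp [seqAlloc]
  | cons a rest ih =>
    cases h : (prefs a).find? (· ∈ rem) with
    | none => rw [seqAlloc_cons_of_find?_eq_none h]; exact ih rem
    | some o =>
      have ho : o ∈ rem := by simpa using List.find?_some h
      rw [seqAlloc_cons_of_find?_eq_some h]
      split_ifs
      · exact Finset.insert_subset ho ((ih _).trans (Finset.erase_subset _ _))
      · exact (ih _).trans (Finset.erase_subset _ _)

theorem seqAlloc_congr_of_find?_eq (prefs prefs' : A → List I) (i : A) (S : Finset I)
    (hother : ∀ a ≠ i, prefs' a = prefs a)
    (hpick : ∀ (rem : Finset I) (o : I), (prefs i).find? (· ∈ rem) = some o → o ∈ S →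
      (prefs' i).find? (· ∈ rem) = some o)
    (π : List A) (rem : Finset I) (hcov : ∀ o ∈ rem, o ∈ prefs i)
    (hS : seqAlloc prefs π rem i ⊆ S) :
    seqAlloc prefs' π rem = seqAlloc prefs π rem := by
  induction π generalizing rem with
  | nil => rfl
  | cons a rest ih =>
    cases h : (prefs a).find? (· ∈ rem) with
    | none =>
      have h' : (prefs' a).find? (· ∈ rem) = none := by
        by_cases hai : a = i
        · subst hai
          have hrem : rem = ∅ := Finset.eq_empty_of_forall_notMem fun x hx =>
            List.find?_eq_none.1 h x (hcov x hx) (by simpa using hx)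
          simp [hrem]
        · rw [hother a hai, h]
      rw [seqAlloc_cons_of_find?_eq_none h] at hS ⊢
      rw [seqAlloc_cons_of_find?_eq_none h']
      exact ih rem hcov hS
    | some o =>
      rw [seqAlloc_cons_of_find?_eq_some h] at hS
      have h' : (prefs' a).find? (· ∈ rem) = some o := by
        by_cases hai : a = i
        · subst hai
          exact hpick rem o h (hS (by simp))
        · rw [hother a hai, h]
      have hrestS : seqAlloc prefs rest (rem.erase o) i ⊆ S := by
        split_ifs at hS
        · exact (Finset.subset_insert _ _).trans hS
        · exact hS
      have hrest := ih (rem.erase o) (fun x hx => hcov x (Finset.mem_of_mem_erase hx)) hrestS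
      funext j
      rw [seqAlloc_cons_of_find?_eq_some h, seqAlloc_cons_of_find?_eq_some h', hrest]

theorem seqAlloc_one_eq_sdiff_zero (prefs : Fin 2 → List I)
    (π : List (Fin 2)) (rem : Finset I) (hcov : ∀ a, ∀ o ∈ rem, o ∈ prefs a)
    (hlen : π.length = rem.card) :
    seqAlloc prefs π rem 1 = rem \ seqAlloc prefs π rem 0 := by
  induction π generalizing rem with
  | nil => simp [seqAlloc, Finset.card_eq_zero.1 hlen.symm]
  | cons a rest ih =>
    obtain ⟨x, hx⟩ : rem.Nonempty := by rw [← Finset.card_pos, ← hlen]; simp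
    obtain ⟨o, h⟩ : ∃ o, (prefs a).find? (· ∈ rem) = some o :=
      Option.isSome_iff_exists.1 (List.find?_isSome.2 ⟨x, hcov a x hx, by simpa using hx⟩)
    have ho : o ∈ rem := by simpa using List.find?_some h
    have hrest := ih (rem.erase o) (fun a y hy => hcov a y (Finset.mem_of_mem_erase hy))
      (by simp [Finset.card_erase_of_mem ho, ← hlen])
    have hfresh : o ∉ seqAlloc prefs rest (rem.erase o) 0 :=
      fun hmem => Finset.notMem_erase o rem (seqAlloc_subset _ _ _ _ hmem)
    rw [seqAlloc_cons_of_find?_eq_some h, seqAlloc_cons_of_find?_eq_some h, hrest]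
    ext y
    fin_cases a <;> grind

end SeqAlloc

theorem statement0_general {I : Type*} [DecidableEq I]
    (O : Finset I) (π : List (Fin 2)) (hπ : π.length = O.card)
    (p2 p1' p1'' : List I) (S : Finset I)
    (hp2 : IsReport O p2) (hp1' : IsReport O p1')
    (hS : alloc2 p1' p2 π O 0 = S)
    (horder : p1''.filter (fun o => decide (o ∈ S)) = p1'.filter (fun o => decide (o ∈ S)))
    (hbelow : p1'' = p1''.filter (fun o => decide (o ∈ S))
        ++ p1''.filter (fun o => decide (o ∉ S))) :
    alloc2 p1'' p2 π O 0 = S ∧ alloc2 p1'' p2 π O 1 = O \ S := by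
  have hsame : alloc2 p1'' p2 π O = alloc2 p1' p2 π O :=
    seqAlloc_congr_of_find?_eq _ _ 0 S (fun a ha => by simp [ha])
      (fun _ _ h ho => find?_eq_of_filter_eq horder hbelow h ho) π O
      (fun o ho => (hp1'.2 o).2 ho) hS.le
  have hcov : ∀ a : Fin 2, ∀ o ∈ O, o ∈ (if a = 0 then p1' else p2) := by
    intro a o ho
    split_ifs
    exacts [(hp1'.2 o).2 ho, (hp2.2 o).2 ho]
  refine ⟨by rw [hsame, hS], ?_⟩
  rw [hsame, alloc2, seqAlloc_one_eq_sdiff_zero _ π O hcov hπ, ← alloc2, hS]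

/-- If report `p1'` gives agent 1 exactly the allocation `S`
(so `|S|` equals the number of turns of agent 1 in `π`), then any report `p1''`
that orders the items of `S` in the same relative order as `p1'` and ranks every
item of `O \ S` below every item of `S` still gives agent 1 the allocation `S`
and agent 2 the allocation `O \ S`. -/
theorem statement0 {I : Type*} [DecidableEq I]
    (O : Finset I) (π : List (Fin 2)) (hπ : π.length = O.card)
    (p2 p1' p1'' : List I) (S : Finset I)
    (hp2 : IsReport O p2) (hp1' : IsReport O p1') (hp1'' : IsReport O p1'')
    (hS : alloc2 p1' p2 π O 0 = S)
    (hcard : S.card = π.count 0)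
    (horder : p1''.filter (fun o => decide (o ∈ S)) = p1'.filter (fun o => decide (o ∈ S)))
    (hbelow : p1'' = p1''.filter (fun o => decide (o ∈ S))
        ++ p1''.filter (fun o => decide (o ∉ S))) :
    alloc2 p1'' p2 π O 0 = S ∧ alloc2 p1'' p2 π O 1 = O \ S :=
  statement0_general O π hπ p2 p1' p1'' S hp2 hp1' hS horder hbelow
end

section
/- In the two-agent manipulation setting, let k₁ be the number of occurrences of agent 1 in π, enumerate O as o₁ ≻₁ o₂ ≻₁ ⋯ ≻₁ o_m, and define the greedy set S* by: starting from S = ∅, for j = 1,…,m in order, add o_j to S whenever S ∪ {o_j} is achievable by agent 1. Then S* is achievable by agent 1, |S*| = k₁, and for every lexicographic utility u₁ consistent with ≻₁ and every achievable set B with |B| = k₁, u₁(S*) ≥ u₁(B). -/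
open Classical in
/-- Greedy construction of a set: go through the ranking list in order and add an
item whenever the resulting set stays in the given (achievability) predicate. -/
noncomputable def greedy {I : Type*} [DecidableEq I]
    (ach : Finset I → Prop) : List I → Finset I → Finset I
  | [], S => S
  | o :: rest, S =>
    if ach (insert o S) then greedy ach rest (insert o S) else greedy ach rest S

/-!
Achievable sets are closed under taking subsets, and every allocation of agent 1 has exactly
`k₁` items, because both reports rank all of `O` and `|π| = |O|`. The greedy set is a maximal
achievable set: it is contained in the allocation of some report, and any item of that
allocation missing from it could still have been added. Hence it is that allocation and has
`k₁` items. If an achievable `B` is not contained in `S*`, look at the first item in the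
ranking at which the greedy run rejected something of `B` or took something outside `B`; by
downward closure it cannot be a rejection, so it is an item of `S* \ B` ranked above all of
`B \ S*`, and a lexicographic utility then prefers `S*`.
-/

section SequentialAllocation

variable {A I : Type*} [DecidableEq A] [DecidableEq I]

theorem card_seqAlloc (prefs : A → List I) (π : List A) (rem : Finset I)
    (hprefs : ∀ a, ∀ x ∈ rem, x ∈ prefs a) (hlen : π.length ≤ rem.card) (j : A) :
    (seqAlloc prefs π rem j).card = π.count j := by
  induction π generalizing rem with
  | nil => simp [seqAlloc]
  | cons a rest ih =>
    rw [seqAlloc]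
    rcases h : (prefs a).find? (fun o => decide (o ∈ rem)) with _ | o
    · obtain ⟨x, hx⟩ : rem.Nonempty := Finset.card_pos.mp (by simp at hlen; omega)
      have : ((prefs a).find? (fun o => decide (o ∈ rem))).isSome := by
        rw [List.find?_isSome]
        exact ⟨x, hprefs a x hx, by simpa using hx⟩
      simp [h] at this
    · have ho : o ∈ rem := by simpa using List.find?_some h
      have ih' := ih (rem.erase o) (fun a x hx => hprefs a x (Finset.mem_of_mem_erase hx))
        (by rw [Finset.card_erase_of_mem ho]; simp at hlen; omega)
      dsimp only
      split_ifs with hj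
      · subst hj
        have hno : o ∉ seqAlloc prefs rest (rem.erase o) j :=
          fun hmem => Finset.notMem_erase o rem (seqAlloc_subset prefs rest _ j hmem)
        rw [Finset.card_insert_of_notMem hno, ih']
        simp
      · rw [ih']
        simp [Ne.symm hj]

theorem alloc2_subset (p1 p2 : List I) (π : List (Fin 2)) (O : Finset I) (j : Fin 2) :
    alloc2 p1 p2 π O j ⊆ O :=
  seqAlloc_subset _ π O j

theorem card_alloc2 {O : Finset I} {π : List (Fin 2)} (hπ : π.length = O.card) {p1 p2 : List I}
    (hp1 : IsReport O p1) (hp2 : IsReport O p2) (j : Fin 2) :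
    (alloc2 p1 p2 π O j).card = π.count j := by
  refine card_seqAlloc _ π O (fun a x hx => ?_) hπ.le j
  split_ifs
  · exact (hp1.2 x).2 hx
  · exact (hp2.2 x).2 hx

theorem Achievable.mono {p2 : List I} {π : List (Fin 2)} {O S T : Finset I} (hST : S ⊆ T)
    (hT : Achievable p2 π O T) : Achievable p2 π O S :=
  let ⟨p, hp, hTp⟩ := hT
  ⟨p, hp, hST.trans hTp⟩

theorem Achievable.subset {p2 : List I} {π : List (Fin 2)} {O S : Finset I}
    (hS : Achievable p2 π O S) : S ⊆ O :=
  let ⟨p, _, hSp⟩ := hS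
  hSp.trans (alloc2_subset p p2 π O 0)

end SequentialAllocation

section Greedy

variable {I : Type*} [DecidableEq I] (ach : Finset I → Prop)

theorem subset_greedy (l : List I) (S : Finset I) : S ⊆ greedy ach l S := by
  induction l generalizing S with
  | nil => exact subset_rfl
  | cons a rest ih =>
    rw [greedy]
    split_ifs
    · exact (Finset.subset_insert a S).trans (ih _)
    · exact ih S

theorem ach_greedy (l : List I) {S : Finset I} (hS : ach S) : ach (greedy ach l S) := by
  induction l generalizing S with
  | nil => exact hS
  | cons a rest ih =>
    rw [greedy]
    split_ifs with h
    · exact ih h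
    · exact ih hS

variable {ach}

theorem not_ach_insert_greedy (hmono : ∀ S T, S ⊆ T → ach T → ach S) {l : List I}
    {S : Finset I} {o : I} (hol : o ∈ l) (hoG : o ∉ greedy ach l S) :
    ¬ ach (insert o (greedy ach l S)) := by
  induction l generalizing S with
  | nil => simp at hol
  | cons a rest ih =>
    rw [greedy] at hoG ⊢
    split_ifs at hoG ⊢ with h
    · rcases List.mem_cons.mp hol with rfl | hol
      · exact absurd (subset_greedy ach rest _ (Finset.mem_insert_self o S)) hoG
      · exact ih hol hoG
    · rcases List.mem_cons.mp hol with rfl | hol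
      · exact fun hins =>
          h (hmono _ _ (Finset.insert_subset_insert o (subset_greedy ach rest S)) hins)
      · exact ih hol hoG

theorem subset_greedy_or_exists_split (hmono : ∀ S T, S ⊆ T → ach T → ach S) (l : List I)
    {S B : Finset I} (hB : ach B) (hSB : S ⊆ B) (hBl : ∀ x ∈ B, x ∈ S ∨ x ∈ l) :
    B ⊆ greedy ach l S ∨
      ∃ l₁ o l₂, l = l₁ ++ o :: l₂ ∧ o ∈ greedy ach l S ∧ o ∉ B ∧
        ∀ x ∈ B, x ∉ greedy ach l S → x ∈ l₂ := by
  induction l generalizing S with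
  | nil =>
    left
    intro x hx
    simpa [greedy] using hBl x hx
  | cons a rest ih =>
    have hBl' : ∀ x ∈ B, x ≠ a → x ∈ S ∨ x ∈ rest := fun x hx hxa => by
      simpa [hxa] using hBl x hx
    rw [greedy]
    split_ifs with h
    · by_cases haB : a ∈ B
      · refine (ih (Finset.insert_subset haB hSB) fun x hx => ?_).imp_right
          fun ⟨l₁, o, l₂, hsplit, h⟩ => ⟨a :: l₁, o, l₂, hsplit ▸ rfl, h⟩
        by_cases hxa : x = a
        · simp [hxa]
        · simpa [hxa] using hBl' x hx hxa
      · refine Or.inr ⟨[], a, rest, rfl, subset_greedy ach rest _ (Finset.mem_insert_self a S),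
          haB, fun x hx hxG => ?_⟩
        have hxa : x ≠ a := by rintro rfl; exact haB hx
        exact (hBl' x hx hxa).resolve_left
          fun hxS => hxG (subset_greedy ach rest _ (Finset.mem_insert_of_mem hxS))
    · have haB : a ∉ B := fun haB => h (hmono _ _ (Finset.insert_subset haB hSB) hB)
      exact (ih hSB fun x hx => hBl' x hx (by rintro rfl; exact haB hx)).imp_right
        fun ⟨l₁, o, l₂, hsplit, h⟩ => ⟨a :: l₁, o, l₂, hsplit ▸ rfl, h⟩

end Greedy

section Lexicographic

variable {I : Type*} [DecidableEq I]

theorem prefers_of_eq_append_cons {l l₁ l₂ : List I} {o o' : I} (hl : l.Nodup)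
    (h : l = l₁ ++ o :: l₂) (ho' : o' ∈ l₂) : Prefers l o o' := by
  subst h
  obtain ⟨-, hcons, hdisj⟩ := List.nodup_append'.mp hl
  have hol₁ : o ∉ l₁ := fun h => hdisj h List.mem_cons_self
  have ho'l₁ : o' ∉ l₁ := fun h => hdisj h (List.mem_cons_of_mem o ho')
  have hoo' : o ≠ o' := by
    rintro rfl
    exact (List.nodup_cons.mp hcons).1 ho'
  unfold Prefers
  rw [List.idxOf_append_of_notMem hol₁, List.idxOf_append_of_notMem ho'l₁,
    List.idxOf_cons_self, List.idxOf_cons_ne _ hoo']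
  omega

theorem sum_lt_sum_of_lexicographic {O : Finset I} {p : List I} {u : I → ℝ}
    (hpos : ∀ o ∈ O, 0 < u o)
    (hlex : ∀ o ∈ O, (∑ o' ∈ O.filter (fun o' => Prefers p o o'), u o') < u o)
    {A B : Finset I} (hAO : A ⊆ O) (hBO : B ⊆ O) {o : I} (hoA : o ∈ A) (hoB : o ∉ B)
    (hbelow : ∀ x ∈ B, x ∉ A → Prefers p o x) :
    ∑ x ∈ B, u x < ∑ x ∈ A, u x := by
  have sum_mono : ∀ {s t : Finset I}, s ⊆ t → t ⊆ O →
      ∑ x ∈ s, u x ≤ ∑ x ∈ t, u x :=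
    fun hst htO => Finset.sum_le_sum_of_subset_of_nonneg hst
      fun x hx _ => (hpos x (htO hx)).le
  calc ∑ x ∈ B, u x = ∑ x ∈ B ∩ A, u x + ∑ x ∈ B \ A, u x :=
        (Finset.sum_inter_add_sum_sdiff B A u).symm
    _ ≤ ∑ x ∈ B ∩ A, u x + ∑ x ∈ O.filter (fun x => Prefers p o x), u x := by
        refine add_le_add_right (sum_mono (fun x hx => ?_) (Finset.filter_subset _ O)) _
        obtain ⟨hxB, hxA⟩ := Finset.mem_sdiff.mp hx
        exact Finset.mem_filter.mpr ⟨hBO hxB, hbelow x hxB hxA⟩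
    _ < ∑ x ∈ B ∩ A, u x + u o := by gcongr; exact hlex o (hAO hoA)
    _ = ∑ x ∈ insert o (B ∩ A), u x :=
        (add_comm _ _).trans (Finset.sum_insert fun h => hoB (Finset.mem_inter.mp h).1).symm
    _ ≤ ∑ x ∈ A, u x := sum_mono (Finset.insert_subset hoA Finset.inter_subset_right) hAO

end Lexicographic

theorem card_greedy_achievable {I : Type*} [DecidableEq I] {O : Finset I} {π : List (Fin 2)}
    (hπ : π.length = O.card) {p1 p2 : List I} (hp1 : IsReport O p1) (hp2 : IsReport O p2) :
    (greedy (Achievable p2 π O) p1 ∅).card = π.count 0 := by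
  obtain ⟨p, hp, hGp⟩ := ach_greedy (Achievable p2 π O) p1 (S := ∅) ⟨p1, hp1, by simp⟩
  suffices alloc2 p p2 π O 0 ⊆ greedy (Achievable p2 π O) p1 ∅ by
    rw [Finset.Subset.antisymm hGp this, card_alloc2 hπ hp hp2]
  intro o hoA
  by_contra hoG
  exact not_ach_insert_greedy (fun _ _ => Achievable.mono)
    ((hp1.2 o).2 (alloc2_subset p p2 π O 0 hoA)) hoG ⟨p, hp, Finset.insert_subset hoA hGp⟩

/-- Enumerate `O` as `o₁ ≻₁ ⋯ ≻₁ o_m` (the true ranking list `p1`)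
and let `S*` be the greedy set obtained by adding `o_j` whenever the current set
together with `o_j` is achievable.  Then `S*` is achievable, `|S*| = k₁` (the number
of turns of agent 1 in `π`), and for every lexicographic utility `u` consistent
with ≻₁ and every achievable `B` with `|B| = k₁`, `u(S*) ≥ u(B)`. -/
theorem statement4 {I : Type*} [DecidableEq I]
    (O : Finset I) (π : List (Fin 2)) (hπ : π.length = O.card)
    (p2 : List I) (hp2 : IsReport O p2)
    (p1 : List I) (hp1 : IsReport O p1)  -- agent 1's true preference ≻₁
    (u : I → ℝ) (hu : Consistent O p1 u)
    (hlex : ∀ o ∈ O, (∑ o' ∈ O.filter (fun o' => Prefers p1 o o'), u o') < u o) :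
    Achievable p2 π O (greedy (Achievable p2 π O) p1 ∅) ∧
    (greedy (Achievable p2 π O) p1 ∅).card = π.count 0 ∧
    ∀ B : Finset I, Achievable p2 π O B → B.card = π.count 0 →
      ∑ o ∈ B, u o ≤ ∑ o ∈ greedy (Achievable p2 π O) p1 ∅, u o := by
  have hG : Achievable p2 π O (greedy (Achievable p2 π O) p1 ∅) :=
    ach_greedy _ p1 ⟨p1, hp1, by simp⟩
  refine ⟨hG, card_greedy_achievable hπ hp1 hp2, fun B hB _ => ?_⟩
  rcases subset_greedy_or_exists_split (fun _ _ => Achievable.mono) p1 hB (Finset.empty_subset B)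
      (fun x hx => Or.inr ((hp1.2 x).2 (hB.subset hx))) with
    hBG | ⟨l₁, o, l₂, hsplit, hoG, hoB, hbelow⟩
  · exact Finset.sum_le_sum_of_subset_of_nonneg hBG fun x hx _ => (hu.1 x (hG.subset hx)).le
  · exact (sum_lt_sum_of_lexicographic hu.1 hlex hG.subset hB.subset hoG hoB
      fun x hxB hxG => prefers_of_eq_append_cons hp1.1 hsplit (hbelow x hxB hxG)).le
end

section
/- In the two-agent manipulation setting, a report ≻₁' of agent 1 is a best response with respect to some additive utility consistent with ≻₁ if and only if it is a best response with respect to every additive utility consistent with ≻₁. -/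
open Finset

lemma IsReport.subset_toFinset {I : Type*} [DecidableEq I] {O : Finset I} {p : List I}
    (hp : IsReport O p) : O ⊆ p.toFinset :=
  fun o ho => List.mem_toFinset.2 ((hp.2 o).2 ho)

theorem List.idxOf_le_of_find?_eq_some {α : Type*} [DecidableEq α] {l : List α} {p : α → Bool}
    {o x : α} (h : l.find? p = some o) (hx : p x) : l.idxOf o ≤ l.idxOf x := by
  induction l with
  | nil => simp at h
  | cons a t ih =>
    by_cases hpa : p a
    · rw [List.find?_cons_of_pos hpa] at h
      cases h
      simp
    · rw [List.find?_cons_of_neg hpa] at h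
      have hoa : a ≠ o := fun hao => hpa (hao ▸ List.find?_some h)
      have hxa : a ≠ x := fun hax => hpa (hax ▸ hx)
      simpa [List.idxOf_cons, hoa, hxa] using ih h

section Picks

def picks (π : List (Fin 2)) (k : ℕ) : ℕ := (π.take k).count 0

variable {π : List (Fin 2)} {k : ℕ}

@[simp] lemma picks_zero (π : List (Fin 2)) : picks π 0 = 0 := by simp [picks]

@[simp] lemma picks_nil (k : ℕ) : picks [] k = 0 := by simp [picks]

@[simp] lemma picks_zero_cons_succ : picks (0 :: π) (k + 1) = picks π k + 1 := by
  simp [picks]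

@[simp] lemma picks_one_cons_succ : picks (1 :: π) (k + 1) = picks π k := by
  simp [picks]

lemma picks_mono (π : List (Fin 2)) : Monotone (picks π) := fun _ _ h =>
  (List.take_sublist_take_left h).count_le 0

lemma picks_succ_le (π : List (Fin 2)) (k : ℕ) : picks π (k + 1) ≤ picks π k + 1 := by
  induction π generalizing k with
  | nil => simp
  | cons a π ih =>
    rcases k with _ | k <;> fin_cases a <;> simp [ih]

lemma picks_le_picks_zero_cons : picks π k ≤ picks (0 :: π) k := by
  rcases k with _ | k
  · simp
  · simpa using picks_succ_le π k

lemma picks_one_cons_le : picks (1 :: π) k ≤ picks π k := by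
  rcases k with _ | k
  · simp
  · simpa using picks_mono π k.le_succ

end Picks

section Allocation

variable {I : Type*} [DecidableEq I] {q p2 : List I} {π : List (Fin 2)} {rem S T : Finset I}
  {o : I}

lemma alloc2_zero_cons_of_find?_eq_some (h : q.find? (· ∈ rem) = some o) :
    alloc2 q p2 (0 :: π) rem 0 = insert o (alloc2 q p2 π (rem.erase o) 0) := by
  simp [alloc2, seqAlloc, h]

lemma alloc2_zero_cons_of_find?_eq_none (h : q.find? (· ∈ rem) = none) :
    alloc2 q p2 (0 :: π) rem 0 = alloc2 q p2 π rem 0 := by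
  simp [alloc2, seqAlloc, h]

lemma alloc2_one_cons_of_find?_eq_some (h : p2.find? (· ∈ rem) = some o) :
    alloc2 q p2 (1 :: π) rem 0 = alloc2 q p2 π (rem.erase o) 0 := by
  simp [alloc2, seqAlloc, h]

lemma alloc2_one_cons_of_find?_eq_none (h : p2.find? (· ∈ rem) = none) :
    alloc2 q p2 (1 :: π) rem 0 = alloc2 q p2 π rem 0 := by
  simp [alloc2, seqAlloc, h]

/-- Agent 2 always takes his favourite remaining item, so agent 1 can end up with `S` only if
every set of `k` remaining items that agent 2 ranks highest contains at most as many items of `S`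
as agent 1 has turns among the first `k`. -/
def Feasible (p2 : List I) (π : List (Fin 2)) (rem S : Finset I) : Prop :=
  ∀ m, #(S ∩ {o ∈ rem | p2.idxOf o < m}) ≤ picks π #{o ∈ rem | p2.idxOf o < m}

lemma feasible_empty : Feasible p2 π rem ∅ := by
  simp [Feasible]

lemma Feasible.mono (h : Feasible p2 π rem S) (hTS : T ⊆ S) : Feasible p2 π rem T :=
  fun m => (card_le_card (inter_subset_inter_right hTS)).trans (h m)

lemma Feasible.zero_cons (h : Feasible p2 π rem S) : Feasible p2 (0 :: π) rem S :=
  fun m => (h m).trans picks_le_picks_zero_cons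

lemma Feasible.zero_cons_insert (h : Feasible p2 π (rem.erase o) S) (ho : o ∉ S) :
    Feasible p2 (0 :: π) rem (insert o S) := by
  intro m
  have hm := h m
  rw [filter_erase] at hm
  set R := {x ∈ rem | p2.idxOf x < m}
  by_cases hoR : o ∈ R
  · have hR : #R = #(R.erase o) + 1 := (card_erase_add_one hoR).symm
    rw [inter_erase, erase_eq_of_notMem fun hoSR => ho (mem_inter.1 hoSR).1] at hm
    rw [insert_inter_of_mem hoR, hR, picks_zero_cons_succ]
    exact (card_insert_le _ _).trans (by omega)
  · rw [insert_inter_of_notMem hoR]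
    rw [erase_eq_of_notMem hoR] at hm
    exact hm.trans picks_le_picks_zero_cons

lemma Feasible.one_cons_of_erase (h : Feasible p2 π (rem.erase o) S)
    (hfind : p2.find? (· ∈ rem) = some o) (hoS : o ∉ S) : Feasible p2 (1 :: π) rem S := by
  intro m
  have hm := h m
  rw [filter_erase] at hm
  set R := {x ∈ rem | p2.idxOf x < m}
  by_cases hoR : o ∈ R
  · have hR : #R = #(R.erase o) + 1 := (card_erase_add_one hoR).symm
    rw [inter_erase, erase_eq_of_notMem fun hoSR => hoS (mem_inter.1 hoSR).1] at hm
    rwa [hR, picks_one_cons_succ]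
  · have hRempty : R = ∅ := by
      refine eq_empty_of_forall_notMem fun x hx => hoR ?_
      have hxR := mem_filter.1 hx
      have hfirst := List.idxOf_le_of_find?_eq_some hfind (by simpa using hxR.1)
      exact mem_filter.2 ⟨by simpa using List.find?_some hfind, by omega⟩
    simp [hRempty]

lemma Feasible.erase_of_zero_cons {s : I} (h : Feasible p2 (0 :: π) rem T) (hT : T ⊆ rem)
    (hfind : p2.find? (· ∈ T) = some s) : Feasible p2 π (rem.erase s) (T.erase s) := by
  intro m
  have hm := h m
  rw [filter_erase]
  set R := {x ∈ rem | p2.idxOf x < m}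
  have hsT : s ∈ T := by simpa using List.find?_some hfind
  by_cases hsR : s ∈ R
  · have hR : #R = #(R.erase s) + 1 := (card_erase_add_one hsR).symm
    rw [hR, picks_zero_cons_succ] at hm
    rw [erase_inter, inter_erase, erase_idem, card_erase_of_mem (mem_inter.2 ⟨hsT, hsR⟩)]
    omega
  · have hTR : T.erase s ∩ R.erase s = ∅ := by
      refine eq_empty_of_forall_notMem fun x hx => hsR ?_
      have hxT := mem_of_mem_erase (mem_inter.1 hx).1
      have hxR := mem_filter.1 (mem_of_mem_erase (mem_inter.1 hx).2)
      have hfirst := List.idxOf_le_of_find?_eq_some hfind (by simpa using hxT)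
      exact mem_filter.2 ⟨hT hsT, by omega⟩
    simp [hTR]

lemma Feasible.notMem_of_one_cons (h : Feasible p2 (1 :: π) rem T)
    (hfind : p2.find? (· ∈ rem) = some o) : o ∉ T := by
  intro hoT
  have ho2 : o ∈ p2 := List.mem_of_find?_eq_some hfind
  have hR : {x ∈ rem | p2.idxOf x < p2.idxOf o + 1} = {o} := by
    ext x
    simp only [mem_filter, mem_singleton]
    constructor
    · rintro ⟨hx, hxo⟩
      have hfirst := List.idxOf_le_of_find?_eq_some hfind (by simpa using hx)
      exact ((List.idxOf_inj ho2).1 (by omega)).symm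
    · rintro rfl
      exact ⟨by simpa using List.find?_some hfind, by omega⟩
  have hm := h (p2.idxOf o + 1)
  rw [hR, inter_singleton_of_mem hoT] at hm
  simp at hm

lemma Feasible.erase_of_one_cons (h : Feasible p2 (1 :: π) rem T) (hoT : o ∉ T) :
    Feasible p2 π (rem.erase o) T := by
  intro m
  have hm := h m
  rw [filter_erase]
  set R := {x ∈ rem | p2.idxOf x < m}
  rw [inter_erase, erase_eq_of_notMem fun hoTR => hoT (mem_inter.1 hoTR).1]
  by_cases hoR : o ∈ R
  · rwa [← card_erase_add_one hoR, picks_one_cons_succ] at hm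
  · rw [erase_eq_of_notMem hoR]
    exact hm.trans picks_one_cons_le

lemma eq_empty_of_find?_eq_none (hS : S ⊆ p2.toFinset) (hSR : S ⊆ rem)
    (h : p2.find? (· ∈ rem) = none) : S = ∅ :=
  eq_empty_of_forall_notMem fun x hx =>
    by simpa [hSR hx] using List.find?_eq_none.1 h x (List.mem_toFinset.1 (hS hx))

theorem alloc2_subset_and_feasible (q : List I) (π : List (Fin 2)) (hrem : rem ⊆ p2.toFinset) :
    alloc2 q p2 π rem 0 ⊆ rem ∧ Feasible p2 π rem (alloc2 q p2 π rem 0) := by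
  induction π generalizing rem with
  | nil => exact ⟨empty_subset _, feasible_empty⟩
  | cons a π ih =>
    match a with
    | 0 =>
      cases hfind : q.find? (· ∈ rem) with
      | none =>
        rw [alloc2_zero_cons_of_find?_eq_none hfind]
        exact (ih hrem).imp_right Feasible.zero_cons
      | some o =>
        rw [alloc2_zero_cons_of_find?_eq_some hfind]
        have hor : o ∈ rem := by simpa using List.find?_some hfind
        obtain ⟨hsub, hfeas⟩ := ih ((erase_subset _ _).trans hrem)
        exact ⟨insert_subset hor (hsub.trans (erase_subset _ _)),
          hfeas.zero_cons_insert fun ho => notMem_erase o rem (hsub ho)⟩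
    | 1 =>
      cases hfind : p2.find? (· ∈ rem) with
      | none =>
        obtain rfl := eq_empty_of_find?_eq_none hrem subset_rfl hfind
        rw [alloc2_one_cons_of_find?_eq_none hfind, subset_empty.1 (ih hrem).1]
        exact ⟨empty_subset _, feasible_empty⟩
      | some o =>
        rw [alloc2_one_cons_of_find?_eq_some hfind]
        obtain ⟨hsub, hfeas⟩ := ih ((erase_subset _ _).trans hrem)
        exact ⟨hsub.trans (erase_subset _ _),
          hfeas.one_cons_of_erase hfind fun ho => notMem_erase o rem (hsub ho)⟩

def frontLoad (p : List I) (S : Finset I) : List I :=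
  p.filter (· ∈ S) ++ p.filter (· ∉ S)

lemma IsReport.frontLoad {O : Finset I} {p : List I} (hp : IsReport O p) (S : Finset I) :
    IsReport O (frontLoad p S) := by
  refine ⟨(hp.1.filter _).append (hp.1.filter _) ?_, fun o => ?_⟩
  · intro x hx hx'
    simp only [List.mem_filter, decide_eq_true_eq] at hx hx'
    exact hx'.2 hx.2
  · rw [_root_.frontLoad, List.mem_append, List.mem_filter, List.mem_filter, ← hp.2 o]
    by_cases h : o ∈ S <;> simp [h]

lemma find?_frontLoad {s : I} (h : p2.find? (· ∈ S ∩ rem) = some s) :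
    (frontLoad p2 S).find? (· ∈ rem) = some s := by
  have h' : (p2.filter (· ∈ S)).find? (· ∈ rem) = some s := by
    simpa [List.find?_filter] using h
  simp [frontLoad, List.find?_append, h']

theorem inter_subset_alloc2_frontLoad (hS : S ⊆ p2.toFinset) (π : List (Fin 2))
    (h : Feasible p2 π rem (S ∩ rem)) : S ∩ rem ⊆ alloc2 (frontLoad p2 S) p2 π rem 0 := by
  induction π generalizing rem with
  | nil =>
    have hall : {o ∈ rem | p2.idxOf o < p2.length + 1} = rem :=
      filter_true_of_mem fun o _ => Nat.lt_succ_of_le List.idxOf_le_length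
    have hm := h (p2.length + 1)
    rw [hall, inter_assoc, inter_self, picks_nil, Nat.le_zero, card_eq_zero] at hm
    simp [hm]
  | cons a π ih =>
    match a with
    | 0 =>
      cases hfind : p2.find? (· ∈ S ∩ rem) with
      | none =>
        simp [eq_empty_of_find?_eq_none (inter_subset_left.trans hS) subset_rfl hfind]
      | some s =>
        rw [alloc2_zero_cons_of_find?_eq_some (find?_frontLoad hfind)]
        have hs : s ∈ S ∩ rem := by simpa using List.find?_some hfind
        have hrest := ih <| by
          rw [inter_erase]; exact h.erase_of_zero_cons inter_subset_right hfind
        rw [inter_erase] at hrest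
        rw [← insert_erase hs]
        exact insert_subset_insert s hrest
    | 1 =>
      cases hfind : p2.find? (· ∈ rem) with
      | none =>
        simp [eq_empty_of_find?_eq_none (inter_subset_left.trans hS) inter_subset_right hfind]
      | some o =>
        rw [alloc2_one_cons_of_find?_eq_some hfind]
        have hoT := h.notMem_of_one_cons hfind
        have hrem : S ∩ rem.erase o = S ∩ rem := by rw [inter_erase, erase_eq_of_notMem hoT]
        rw [← hrem]
        exact ih (hrem ▸ h.erase_of_one_cons hoT)

theorem subset_alloc2_frontLoad (hS : S ⊆ p2.toFinset) (hSrem : S ⊆ rem) (π : List (Fin 2))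
    (h : Feasible p2 π rem S) : S ⊆ alloc2 (frontLoad p2 S) p2 π rem 0 := by
  have hS' := inter_subset_alloc2_frontLoad hS π (rem := rem) (by rwa [inter_eq_left.2 hSrem])
  rwa [inter_eq_left.2 hSrem] at hS'

end Allocation

section Augmentation

variable {I : Type*} [DecidableEq I]

/-- Otherwise the largest tight member of the chain that contains an element of `T \ S` would
force `#T ≤ #S`. -/
theorem exists_insert_of_card_lt {ι : Type*} [LinearOrder ι] {R : ι → Finset I} (hR : Monotone R)
    {c : ι → ℕ} {S T : Finset I} (hS : ∀ i, #(S ∩ R i) ≤ c i) (hT : ∀ i, #(T ∩ R i) ≤ c i)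
    (hST : #S < #T) : ∃ o ∈ T, o ∉ S ∧ ∀ i, #(insert o S ∩ R i) ≤ c i := by
  by_contra! hcon
  have htight : ∀ o ∈ T \ S, ∃ i, o ∈ R i ∧ #(S ∩ R i) = c i := by
    intro o ho
    obtain ⟨hoT, hoS⟩ := mem_sdiff.1 ho
    obtain ⟨i, hi⟩ := hcon o hoT hoS
    by_cases hoR : o ∈ R i
    · rw [insert_inter_of_mem hoR, card_insert_of_notMem fun h => hoS (mem_inter.1 h).1] at hi
      exact ⟨i, hoR, le_antisymm (hS i) (by omega)⟩
    · rw [insert_inter_of_notMem hoR] at hi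
      exact absurd (hS i) (not_le.2 hi)
  have hne : (T \ S).Nonempty := by
    by_contra hempty
    rw [not_nonempty_iff_eq_empty, sdiff_eq_empty_iff_subset] at hempty
    exact absurd (card_le_card hempty) (not_le.2 hST)
  have : Nonempty ι := ⟨(htight _ hne.choose_spec).choose⟩
  choose! idx hidx using htight
  obtain ⟨o, ho, hmax⟩ := exists_max_image (T \ S) idx hne
  have hTS : T \ R (idx o) ⊆ S \ R (idx o) := fun x hx => by
    obtain ⟨hxT, hxR⟩ := mem_sdiff.1 hx
    by_contra hxS
    have hxTS : x ∈ T \ S := mem_sdiff.2 ⟨hxT, fun h => hxS (mem_sdiff.2 ⟨h, hxR⟩)⟩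
    exact hxR (hR (hmax x hxTS) (hidx x hxTS).1)
  have hTcard := card_inter_add_card_sdiff T (R (idx o))
  have hScard := card_inter_add_card_sdiff S (R (idx o))
  have := card_le_card hTS
  have := hT (idx o)
  have := (hidx o ho).2
  omega

variable {p2 : List I} {π : List (Fin 2)} {rem S T : Finset I}

lemma Feasible.exists_insert (hS : Feasible p2 π rem S) (hT : Feasible p2 π rem T)
    (hST : #S < #T) : ∃ o ∈ T, o ∉ S ∧ Feasible p2 π rem (insert o S) :=
  exists_insert_of_card_lt (R := fun m => {o ∈ rem | p2.idxOf o < m})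
    (c := fun m => picks π #{o ∈ rem | p2.idxOf o < m})
    (fun _ _ hmm' => monotone_filter_right rem fun _ _ h => lt_of_lt_of_le h hmm') hS hT hST

end Augmentation

section Dominance

variable {I : Type*} [DecidableEq I]

def Dominates (p : List I) (S T : Finset I) : Prop :=
  ∀ m, #{o ∈ T | p.idxOf o < m} ≤ #{o ∈ S | p.idxOf o < m}

lemma sum_two_pow_lt_of_idxOf_lt {p : List I} {X : Finset I} {o : I} (hX : X ⊆ p.toFinset)
    (hXo : ∀ x ∈ X, p.idxOf o < p.idxOf x) :
    ∑ x ∈ X, 2 ^ (p.length - p.idxOf x) < 2 ^ (p.length - p.idxOf o) := by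
  have hlt : ∀ x ∈ X, p.idxOf x < p.length := fun x hx =>
    List.idxOf_lt_length_iff.2 (List.mem_toFinset.1 (hX hx))
  have hinj : Set.InjOn (fun x => p.length - p.idxOf x) X := fun x hx y hy hxy => by
    have := hlt x hx
    have := hlt y hy
    exact (List.idxOf_inj (List.mem_toFinset.1 (hX hx))).1 (by simp only at hxy; omega)
  rw [← sum_image (f := fun j => 2 ^ j) hinj]
  refine Nat.geomSum_lt le_rfl fun j hj => ?_
  obtain ⟨x, hx, rfl⟩ := mem_image.1 hj
  have := hlt x hx
  have := hXo x hx
  omega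

/-- Take `S` maximising the weight `∑ 2 ^ (length - rank)`: augmenting inside an initial segment
where `T` beats `S` would give a heavier set. -/
theorem exists_forall_dominates {P : Finset I → Prop} (hmono : ∀ ⦃S T⦄, T ⊆ S → P S → P T)
    (haug : ∀ ⦃S T⦄, P S → P T → #S < #T → ∃ o ∈ T, o ∉ S ∧ P (insert o S)) (h0 : P ∅)
    {O : Finset I} {p : List I} (hO : O ⊆ p.toFinset) :
    ∃ S ⊆ O, P S ∧ ∀ T ⊆ O, P T → Dominates p S T := by
  classical
  let w : Finset I → ℕ := fun S => ∑ o ∈ S, 2 ^ (p.length - p.idxOf o)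
  obtain ⟨S, hS, hmax⟩ := exists_max_image {S ∈ O.powerset | P S} w ⟨∅, by simp [h0]⟩
  rw [mem_filter, mem_powerset] at hS
  refine ⟨S, hS.1, hS.2, fun T hTO hT m => ?_⟩
  by_contra! hlt
  obtain ⟨o, hoT, hoS, hP⟩ :=
    haug (hmono (filter_subset _ S) hS.2) (hmono (filter_subset _ T) hT) hlt
  obtain ⟨hoT, hom⟩ := mem_filter.1 hoT
  have hoS' : o ∉ S := fun h => hoS (mem_filter.2 ⟨h, hom⟩)
  have hle := hmax (insert o {x ∈ S | p.idxOf x < m}) <| by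
    rw [mem_filter, mem_powerset]
    exact ⟨insert_subset (hTO hoT) ((filter_subset _ S).trans hS.1), hP⟩
  have htail : w {x ∈ S | ¬ p.idxOf x < m} < 2 ^ (p.length - p.idxOf o) :=
    sum_two_pow_lt_of_idxOf_lt ((filter_subset _ S).trans (hS.1.trans hO)) fun x hx => by
      have := (mem_filter.1 hx).2
      omega
  have hsplit := sum_filter_add_sum_filter_not S (fun x => p.idxOf x < m)
    (fun x => 2 ^ (p.length - p.idxOf x))
  simp only [w, sum_insert hoS] at hle htail
  omega

end Dominance

section Utility

variable {I : Type*} [DecidableEq I]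

theorem eq_sum_range_by_parts_of_sub_eq_mul {R : Type*} [CommRing R] {a D Δ : ℕ → R}
    (hD : D 0 = 0) (hΔ : Δ 0 = 0) (h : ∀ i, D (i + 1) - D i = a i * (Δ (i + 1) - Δ i)) (n : ℕ) :
    D n = a n * Δ n + ∑ i ∈ range n, (a i - a (i + 1)) * Δ (i + 1) := by
  induction n with
  | zero => simp [hD, hΔ]
  | succ n ih =>
    rw [sum_range_succ]
    linear_combination ih + h n

variable {p : List I} {S T : Finset I}

lemma filter_idxOf_lt_succ (S : Finset I) (i : ℕ) :
    {x ∈ S | p.idxOf x < i + 1} = {x ∈ S | p.idxOf x < i} ∪ {x ∈ S | p.idxOf x = i} := by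
  rw [← filter_or]
  exact filter_congr fun _ _ => Nat.lt_succ_iff_lt_or_eq

lemma disjoint_filter_idxOf_lt_eq (S : Finset I) (i : ℕ) :
    Disjoint {x ∈ S | p.idxOf x < i} {x ∈ S | p.idxOf x = i} :=
  disjoint_filter.2 fun _ _ h => h.ne

lemma filter_idxOf_lt_length (hS : S ⊆ p.toFinset) : {x ∈ S | p.idxOf x < p.length} = S :=
  filter_true_of_mem fun _ hx => List.idxOf_lt_length_iff.2 (List.mem_toFinset.1 (hS hx))

lemma filter_idxOf_eq_idxOf (hS : S ⊆ p.toFinset) (o : I) :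
    {x ∈ S | p.idxOf x = p.idxOf o} = if o ∈ S then {o} else ∅ := by
  ext x
  have hinj : x ∈ S → (p.idxOf x = p.idxOf o ↔ x = o) := fun hx =>
    List.idxOf_inj (List.mem_toFinset.1 (hS hx))
  split_ifs with hoS <;> simp only [mem_filter, mem_singleton, notMem_empty, iff_false] <;>
    grind

/-- `(p.map u).getD i 0` is the utility of the `i`-th item of `p`, and `0` past its end. -/
theorem sum_eq_sum_range_mul_card_filter (hS : S ⊆ p.toFinset) (u : I → ℝ) :
    ∑ o ∈ S, u o = ∑ i ∈ range p.length,
      ((p.map u).getD i 0 - (p.map u).getD (i + 1) 0) * #{o ∈ S | p.idxOf o < i + 1} := by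
  have hstep : ∀ i, ∑ o ∈ S with p.idxOf o < i + 1, u o - ∑ o ∈ S with p.idxOf o < i, u o =
      (p.map u).getD i 0 * (#{o ∈ S | p.idxOf o < i + 1} - #{o ∈ S | p.idxOf o < i} : ℝ) := by
    intro i
    rw [filter_idxOf_lt_succ, sum_union (disjoint_filter_idxOf_lt_eq S i),
      card_union_of_disjoint (disjoint_filter_idxOf_lt_eq S i), Nat.cast_add, add_sub_cancel_left,
      add_sub_cancel_left, mul_comm, ← nsmul_eq_mul, ← sum_const]
    refine sum_congr rfl fun x hx => ?_
    obtain ⟨hxS, rfl⟩ := mem_filter.1 hx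
    have hx : p.idxOf x < p.length := List.idxOf_lt_length_iff.2 (List.mem_toFinset.1 (hS hxS))
    rw [List.getD_eq_getElem _ _ (by simpa using hx), List.getElem_map, List.getElem_idxOf]
  have := eq_sum_range_by_parts_of_sub_eq_mul (D := fun k => ∑ o ∈ S with p.idxOf o < k, u o)
    (Δ := fun k => (#{o ∈ S | p.idxOf o < k} : ℝ)) (by simp) (by simp) hstep p.length
  rwa [filter_idxOf_lt_length hS, List.getD_eq_default _ _ (by simp), zero_mul, zero_add] at this

end Utility

section Comparison

variable {I : Type*} [DecidableEq I] {O S T : Finset I} {p : List I} {u : I → ℝ}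

lemma Dominates.exists_lt_of_ne (hS : S ⊆ p.toFinset) (hT : T ⊆ p.toFinset)
    (hdom : Dominates p S T) (hne : T ≠ S) :
    ∃ i < p.length, #{o ∈ T | p.idxOf o < i + 1} < #{o ∈ S | p.idxOf o < i + 1} := by
  obtain ⟨o, ho⟩ := symmDiff_nonempty.2 hne
  have hop : p.idxOf o < p.length := by
    rw [mem_symmDiff] at ho
    refine List.idxOf_lt_length_iff.2 (List.mem_toFinset.1 ?_)
    rcases ho with ⟨h, -⟩ | ⟨h, -⟩
    exacts [hT h, hS h]
  by_contra! h
  have heq : ∀ m ≤ p.length, #{x ∈ T | p.idxOf x < m} = #{x ∈ S | p.idxOf x < m} := by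
    rintro (_ | m) hm
    · simp
    · exact le_antisymm (hdom _) (h m hm)
  have hT' := heq (p.idxOf o + 1) hop
  rw [filter_idxOf_lt_succ, filter_idxOf_lt_succ,
    card_union_of_disjoint (disjoint_filter_idxOf_lt_eq _ _),
    card_union_of_disjoint (disjoint_filter_idxOf_lt_eq _ _), heq _ hop.le,
    filter_idxOf_eq_idxOf hS, filter_idxOf_eq_idxOf hT] at hT'
  rw [mem_symmDiff] at ho
  rcases ho with ⟨h1, h2⟩ | ⟨h1, h2⟩ <;> simp [h1, h2] at hT'

lemma Consistent.getD_sub_getD_pos (hp : IsReport O p) (hu : Consistent O p u) {i : ℕ}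
    (hi : i < p.length) : 0 < (p.map u).getD i 0 - (p.map u).getD (i + 1) 0 := by
  have hmem : ∀ j (hj : j < p.length), p[j] ∈ O := fun j hj => (hp.2 _).1 (List.getElem_mem hj)
  rw [List.getD_eq_getElem _ _ (by simpa), List.getElem_map]
  by_cases hi' : i + 1 < p.length
  · rw [List.getD_eq_getElem _ _ (by simpa), List.getElem_map, sub_pos]
    refine (hu.2 _ (hmem i hi) _ (hmem _ hi')).2 ?_
    rw [Prefers, hp.1.idxOf_getElem, hp.1.idxOf_getElem]
    omega
  · rw [List.getD_eq_default _ _ (by simp; omega), sub_zero]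
    exact hu.1 _ (hmem i hi)

theorem sum_lt_sum_of_dominates (hp : IsReport O p) (hu : Consistent O p u) (hS : S ⊆ O)
    (hT : T ⊆ O) (hdom : Dominates p S T) (hne : T ≠ S) : ∑ o ∈ T, u o < ∑ o ∈ S, u o := by
  have hO := hp.subset_toFinset
  rw [← sub_pos, sum_eq_sum_range_mul_card_filter (hS.trans hO),
    sum_eq_sum_range_mul_card_filter (hT.trans hO), ← sum_sub_distrib]
  obtain ⟨i, hi, hlt⟩ := hdom.exists_lt_of_ne (hS.trans hO) (hT.trans hO) hne
  refine sum_pos' (fun j hj => ?_) ⟨i, mem_range.2 hi, ?_⟩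
  · rw [← mul_sub]
    exact mul_nonneg (hu.getD_sub_getD_pos hp (mem_range.1 hj)).le
      (sub_nonneg.2 (Nat.cast_le.2 (hdom _)))
  · rw [← mul_sub]
    exact mul_pos (hu.getD_sub_getD_pos hp hi) (sub_pos.2 (Nat.cast_lt.2 hlt))

theorem sum_le_sum_of_dominates (hp : IsReport O p) (hu : Consistent O p u) (hS : S ⊆ O)
    (hT : T ⊆ O) (hdom : Dominates p S T) : ∑ o ∈ T, u o ≤ ∑ o ∈ S, u o := by
  rcases eq_or_ne T S with rfl | hne
  · exact le_rfl
  · exact (sum_lt_sum_of_dominates hp hu hS hT hdom hne).le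

lemma IsReport.exists_consistent (hp : IsReport O p) : ∃ u, Consistent O p u := by
  refine ⟨fun o => p.length - p.idxOf o, fun o ho => ?_, fun o _ o' _ => ?_⟩
  · have : p.idxOf o < p.length := List.idxOf_lt_length_iff.2 ((hp.2 o).2 ho)
    simpa using (Nat.cast_lt (α := ℝ)).2 this
  · simp [Prefers]

end Comparison

theorem statement7_general {I : Type*} [DecidableEq I]
    (O : Finset I) (π : List (Fin 2))
    (p2 : List I) (hp2 : IsReport O p2)
    (p1 : List I) (hp1 : IsReport O p1)  -- agent 1's true preference ≻₁
    (q : List I) :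
    (∃ u : I → ℝ, Consistent O p1 u ∧
      ∀ q' : List I, IsReport O q' →
        ∑ o ∈ alloc2 q' p2 π O 0, u o ≤ ∑ o ∈ alloc2 q p2 π O 0, u o) ↔
    (∀ u : I → ℝ, Consistent O p1 u →
      ∀ q' : List I, IsReport O q' →
        ∑ o ∈ alloc2 q' p2 π O 0, u o ≤ ∑ o ∈ alloc2 q p2 π O 0, u o) := by
  have hO2 := hp2.subset_toFinset
  have halloc q' := alloc2_subset_and_feasible q' π hO2
  obtain ⟨S, hSO, hS, hdom⟩ := exists_forall_dominates (P := Feasible p2 π O)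
    (fun _ _ hTS hS => hS.mono hTS) (fun _ _ => Feasible.exists_insert) feasible_empty
    hp1.subset_toFinset
  have hdom' q' : Dominates p1 S (alloc2 q' p2 π O 0) := hdom _ (halloc q').1 (halloc q').2
  constructor
  · rintro ⟨u₀, hu₀, hq⟩ u hu q' -
    suffices hqS : alloc2 q p2 π O 0 = S by
      rw [hqS]
      exact sum_le_sum_of_dominates hp1 hu hSO (halloc q').1 (hdom' q')
    by_contra hne
    have hlt := sum_lt_sum_of_dominates hp1 hu₀ hSO (halloc q).1 (hdom' q) hne
    have hreal := subset_alloc2_frontLoad (hSO.trans hO2) hSO π hS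
    have := sum_le_sum_of_subset_of_nonneg hreal fun o ho _ => (hu₀.1 o ((halloc _).1 ho)).le
    linarith [hq _ (hp2.frontLoad S)]
  · intro h
    obtain ⟨u₀, hu₀⟩ := hp1.exists_consistent
    exact ⟨u₀, hu₀, h u₀ hu₀⟩

/-- A report `q` of agent 1 is a best response with respect to
SOME additive utility consistent with ≻₁ (the true ranking `p1`) if and only if
it is a best response with respect to EVERY additive utility consistent with ≻₁. -/
theorem statement7 {I : Type*} [DecidableEq I]
    (O : Finset I) (π : List (Fin 2)) (hπ : π.length = O.card)
    (p2 : List I) (hp2 : IsReport O p2)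
    (p1 : List I) (hp1 : IsReport O p1)  -- agent 1's true preference ≻₁
    (q : List I) (hq : IsReport O q) :
    (∃ u : I → ℝ, Consistent O p1 u ∧
      ∀ q' : List I, IsReport O q' →
        ∑ o ∈ alloc2 q' p2 π O 0, u o ≤ ∑ o ∈ alloc2 q p2 π O 0, u o) ↔
    (∀ u : I → ℝ, Consistent O p1 u →
      ∀ q' : List I, IsReport O q' →
        ∑ o ∈ alloc2 q' p2 π O 0, u o ≤ ∑ o ∈ alloc2 q p2 π O 0, u o) :=
  statement7_general O π p2 hp2 p1 hp1 q
end

section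
/- In the fixed 3-agent instance, equip agent 1 with the additive utility u₁(a) = 4, u₁(b) = 3, u₁(c) = 2, u₁(d) = 1 (which is consistent with a ≻₁ b ≻₁ c ≻₁ d). Then every report of agent 1 yields agent 1 utility at most 5, and both the truthful report a ≻ b ≻ c ≻ d (giving allocation {a,d}) and the report c ≻ b ≻ a ≻ d (giving allocation {b,c}) yield utility exactly 5. Hence both reports are best responses, yet they give agent 1 different allocations. -/
/-- Three-agent sequential allocation: agents `0, 1, 2` ("agents 1, 2, 3")
report the ranking lists `p1, p2, p3` respectively. -/
def alloc3 {I : Type*} [DecidableEq I] (p1 p2 p3 : List I)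
    (π : List (Fin 3)) (O : Finset I) : Fin 3 → Finset I :=
  seqAlloc (fun ag => if ag = 0 then p1 else if ag = 1 then p2 else p3) π O

namespace FixedInstance

/-- Item `a`. -/
def a : Fin 4 := 0
/-- Item `b`. -/
def b : Fin 4 := 1
/-- Item `c`. -/
def c : Fin 4 := 2
/-- Item `d`. -/
def d : Fin 4 := 3

/-- Agent 1's true preference: `a ≻₁ b ≻₁ c ≻₁ d`. -/
def pref1 : List (Fin 4) := [a, b, c, d]

/-- Agent 2's (truthful) report: `c ≻₂ d ≻₂ a ≻₂ b`. -/
def pref2 : List (Fin 4) := [c, d, a, b]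

/-- Agent 3's (truthful) report: `a ≻₃ b ≻₃ c ≻₃ d`. -/
def pref3 : List (Fin 4) := [a, b, c, d]

/-- The picking sequence `1, 2, 3, 1`. -/
def pick : List (Fin 3) := [0, 1, 2, 0]

/-- The item set `O = {a, b, c, d}`. -/
def items : Finset (Fin 4) := Finset.univ

end FixedInstance

/-!
Agent 1 moves first and last. His first pick is the top item `x` of his report; agents 2 and 3
then take their favourites among the rest, and his last pick is the single item left over,
whatever the remainder of his report says. So his bundle depends on `x` alone, and the four
choices `x = a, b, c, d` give the bundles `{a, d}, {b, d}, {c, b}, {d, b}` of utility `5, 4, 5, 4`.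
-/

theorem IsReport.perm {I : Type*} [DecidableEq I] {O : Finset I} {p q : List I}
    (hp : IsReport O p) (hq : IsReport O q) : p.Perm q :=
  (List.perm_ext_iff_of_nodup hp.1 hq.1).2 fun o => (hp.2 o).trans (hq.2 o).symm

namespace FixedInstance

theorem isReport_pref1 : IsReport items pref1 := by
  unfold IsReport; decide

theorem alloc3_cons_eq_of_perm (x : Fin 4) {r r' : List (Fin 4)} (h : r.Perm r') :
    alloc3 (x :: r) pref2 pref3 pick items 0 = alloc3 (x :: r') pref2 pref3 pick items 0 := by
  -- the tail of the report is read only once, against the single item left at the end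
  have find?_eq :
      ∀ p : Fin 4 → Bool, (∀ y z, p y → p z → y = z) → r.find? p = r'.find? p :=
    fun p hp => List.find?_eq_find?_of_perm h fun y hy z hz => hp y z hy.2 hz.2
  fin_cases x <;> simp +decide [alloc3, seqAlloc, pick, pref2, pref3, items, a, b, c, d, find?_eq]

theorem exists_alloc3_eq_of_isReport {p1 : List (Fin 4)} (h : IsReport items p1) :
    ∃ x, alloc3 p1 pref2 pref3 pick items 0 =
      alloc3 (x :: pref1.erase x) pref2 pref3 pick items 0 := by
  obtain ⟨x, r, rfl⟩ :=
    List.exists_cons_of_ne_nil (List.ne_nil_of_mem ((h.2 a).2 (Finset.mem_univ a)))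
  refine ⟨x, alloc3_cons_eq_of_perm x ?_⟩
  simpa using (h.perm isReport_pref1).erase x

theorem sum_alloc3_cons_le (x : Fin 4) :
    ∑ o ∈ alloc3 (x :: pref1.erase x) pref2 pref3 pick items 0,
      (![4, 3, 2, 1] : Fin 4 → ℝ) o ≤ 5 := by
  fin_cases x <;>
    simp +decide [alloc3, seqAlloc, pick, pref1, pref2, pref3, items, a, b, c, d] <;> norm_num

theorem sum_alloc3_le_of_isReport {p1 : List (Fin 4)} (h : IsReport items p1) :
    ∑ o ∈ alloc3 p1 pref2 pref3 pick items 0, (![4, 3, 2, 1] : Fin 4 → ℝ) o ≤ 5 := by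
  obtain ⟨x, hx⟩ := exists_alloc3_eq_of_isReport h
  exact hx ▸ sum_alloc3_cons_le x

theorem alloc3_abcd : alloc3 [a, b, c, d] pref2 pref3 pick items 0 = {a, d} := by decide

theorem alloc3_cbad : alloc3 [c, b, a, d] pref2 pref3 pick items 0 = {b, c} := by decide

theorem consistent_pref1 : Consistent items pref1 ![4, 3, 2, 1] := by
  refine ⟨fun o _ => ?_, fun o _ o' _ => ?_⟩
  · fin_cases o <;> norm_num
  · fin_cases o <;> fin_cases o' <;> norm_num <;> decide

end FixedInstance

open FixedInstance in
/-- In the fixed 3-agent instance, equip agent 1 with the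
additive utility `u(a)=4, u(b)=3, u(c)=2, u(d)=1` (consistent with
`a ≻₁ b ≻₁ c ≻₁ d`).  Every report of agent 1 yields utility at most `5`; the
truthful report `a ≻ b ≻ c ≻ d` gives allocation `{a,d}` of utility exactly `5`,
and the report `c ≻ b ≻ a ≻ d` gives allocation `{b,c}` of utility exactly `5`.
Hence both reports are best responses, yet they give agent 1 different
allocations. -/
theorem statement10 (u : Fin 4 → ℝ) (hu : u = ![4, 3, 2, 1]) :
    Consistent items pref1 u ∧
    (∀ p1 : List (Fin 4), IsReport items p1 →
      ∑ o ∈ alloc3 p1 pref2 pref3 pick items 0, u o ≤ 5) ∧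
    (alloc3 [a, b, c, d] pref2 pref3 pick items 0 = {a, d} ∧
      ∑ o ∈ alloc3 [a, b, c, d] pref2 pref3 pick items 0, u o = 5) ∧
    (alloc3 [c, b, a, d] pref2 pref3 pick items 0 = {b, c} ∧
      ∑ o ∈ alloc3 [c, b, a, d] pref2 pref3 pick items 0, u o = 5) ∧
    (∀ p1 : List (Fin 4), IsReport items p1 →
      ∑ o ∈ alloc3 p1 pref2 pref3 pick items 0, u o ≤
        ∑ o ∈ alloc3 [a, b, c, d] pref2 pref3 pick items 0, u o) ∧
    (∀ p1 : List (Fin 4), IsReport items p1 →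
      ∑ o ∈ alloc3 p1 pref2 pref3 pick items 0, u o ≤
        ∑ o ∈ alloc3 [c, b, a, d] pref2 pref3 pick items 0, u o) ∧
    alloc3 [a, b, c, d] pref2 pref3 pick items 0 ≠
      alloc3 [c, b, a, d] pref2 pref3 pick items 0 := by
  subst hu
  have sum_abcd : ∑ o ∈ alloc3 [a, b, c, d] pref2 pref3 pick items 0,
      (![4, 3, 2, 1] : Fin 4 → ℝ) o = 5 := by
    rw [alloc3_abcd, Finset.sum_pair (by decide)]
    show (4 : ℝ) + 1 = 5
    norm_num
  have sum_cbad : ∑ o ∈ alloc3 [c, b, a, d] pref2 pref3 pick items 0,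
      (![4, 3, 2, 1] : Fin 4 → ℝ) o = 5 := by
    rw [alloc3_cbad, Finset.sum_pair (by decide)]
    show (3 : ℝ) + 2 = 5
    norm_num
  refine ⟨consistent_pref1, fun _ => sum_alloc3_le_of_isReport, ⟨alloc3_abcd, sum_abcd⟩,
    ⟨alloc3_cbad, sum_cbad⟩, fun _ h => sum_abcd ▸ sum_alloc3_le_of_isReport h,
    fun _ h => sum_cbad ▸ sum_alloc3_le_of_isReport h, ?_⟩
  rw [alloc3_abcd, alloc3_cbad]
  decide
end
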